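/- Let (M, d) be a length space, Θ ⊆ M permeable, and (Y, d_Y) a metric space. If f : M → Y is continuous and its restriction to M \ Θ is L-Lipschitz with respect to the intrinsic metric on M \ Θ, then f is L-Lipschitz continuous on all of M with respect to d. -/

import Mathlib

open Set MeasureTheory ENNReal

section Defs

variable {M : Type*} [MetricSpace M]

/-- `γ` is a path in `E` from `x` to `y` parametrized on `[a,b]`. -/
def IsPathIn (E : Set M) (γ : ℝ → M) (a b : ℝ) (x y : M) : Prop :=
  a ≤ b ∧ ContinuousOn γ (Set.Icc a b) ∧ γ a = x ∧ γ b = y ∧ ∀ t ∈ Set.Icc a b, γ t ∈ E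

/-- Length of a path: total variation over `[a,b]`. -/
noncomputable def pathLength (γ : ℝ → M) (a b : ℝ) : ℝ≥0∞ := eVariationOn γ (Set.Icc a b)

/-- Intrinsic metric on `E`: infimum of lengths of finite-length paths in `E`. -/
noncomputable def intrinsicDist (E : Set M) (x y : M) : ℝ≥0∞ :=
  sInf { L | ∃ γ a b, IsPathIn E γ a b x y ∧ pathLength γ a b < ⊤ ∧ pathLength γ a b = L }

/-- `Θ`-intrinsic metric relative to ambient set `N`: only paths whose intersection with `Θ`
has countable closure (closure taken in the subspace `N`) are allowed. -/
noncomputable def thetaDistIn (N Θ : Set M) (x y : M) : ℝ≥0∞ :=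
  sInf { L | ∃ γ a b, IsPathIn N γ a b x y ∧ pathLength γ a b < ⊤ ∧
    (closure (γ '' Set.Icc a b ∩ Θ) ∩ N).Countable ∧ pathLength γ a b = L }

/-- `Θ`-finite intrinsic metric relative to ambient set `N`: only paths meeting `Θ` in finitely
many points are allowed. -/
noncomputable def thetaFinDistIn (N Θ : Set M) (x y : M) : ℝ≥0∞ :=
  sInf { L | ∃ γ a b, IsPathIn N γ a b x y ∧ pathLength γ a b < ⊤ ∧
    (γ '' Set.Icc a b ∩ Θ).Finite ∧ pathLength γ a b = L }

/-- `Θ` is permeable relative to `N`. -/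
def PermeableIn (N Θ : Set M) : Prop :=
  ∀ x ∈ N, ∀ y ∈ N, thetaDistIn N Θ x y = intrinsicDist N x y

/-- `Θ` is finitely permeable relative to `N`. -/
def FinitelyPermeableIn (N Θ : Set M) : Prop :=
  ∀ x ∈ N, ∀ y ∈ N, thetaFinDistIn N Θ x y = intrinsicDist N x y

/-- `Θ` is permeable (relative to the whole space). -/
def Permeable (Θ : Set M) : Prop := PermeableIn Set.univ Θ

/-- `Θ` is finitely permeable (relative to the whole space). -/
def FinitelyPermeable (Θ : Set M) : Prop := FinitelyPermeableIn Set.univ Θ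

end Defs

/-!
Fix a path `γ : [a, b] → M` from `x` to `y` of finite length `ℓ` such that the closure `C` of
`γ([a, b]) ∩ Θ` is countable, and put `h t = d(f (γ t), f x)` and `V t = L · length(γ|[a, t])`.
Wherever `γ` avoids `Θ` on `[s, t]`, the hypothesis on `f` gives `|h t - h s| ≤ V t - V s`.
The values of `h` at the times `γ⁻¹(C)`, together with `h a` and `h b`, form a closed countable,
hence null, set `F`; so `[h a, h b]` is covered up to a null set by the gaps `(p, q)` of `F`.
Each gap is crossed by `h` during a time interval on which `γ` avoids `Θ`, and these intervals
are pairwise disjoint, so `d(f x, f y) ≤ ∑ (q - p) ≤ V b - V a = L ℓ`. Since `Θ` is permeable and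
`M` is a length space, such `ℓ` come arbitrarily close to `d(x, y)`.
-/

namespace Real

def gapsIn (F : Set ℝ) (x y : ℝ) : Set (ℝ × ℝ) :=
  {g | g.1 ∈ F ∧ g.2 ∈ F ∧ x ≤ g.1 ∧ g.1 < g.2 ∧ g.2 ≤ y ∧ Disjoint (Ioo g.1 g.2) F}

variable {F : Set ℝ} {x y : ℝ}

theorem gapsIn_countable (hF : F.Countable) : (gapsIn F x y).Countable :=
  (hF.prod hF).mono fun _ hg => mem_prod.2 ⟨hg.1, hg.2.1⟩

theorem gapsIn_le_or_le {g g' : ℝ × ℝ} (hg : g ∈ gapsIn F x y) (hg' : g' ∈ gapsIn F x y)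
    (hne : g ≠ g') : g.2 ≤ g'.1 ∨ g'.2 ≤ g.1 := by
  have h₁ : g'.1 ∉ Ioo g.1 g.2 := fun h => disjoint_left.1 hg.2.2.2.2.2 h hg'.1
  have h₂ : g'.2 ∉ Ioo g.1 g.2 := fun h => disjoint_left.1 hg.2.2.2.2.2 h hg'.2.1
  have h₃ : g.1 ∉ Ioo g'.1 g'.2 := fun h => disjoint_left.1 hg'.2.2.2.2.2 h hg.1
  have h₄ : g.2 ∉ Ioo g'.1 g'.2 := fun h => disjoint_left.1 hg'.2.2.2.2.2 h hg.2.1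
  simp only [mem_Ioo, not_and, not_lt] at h₁ h₂ h₃ h₄
  by_contra! H
  exact hne (Prod.ext (by grind) (by grind))

theorem Ioo_subset_union_gapsIn (hF : IsClosed F) (hx : x ∈ F) (hy : y ∈ F) :
    Ioo x y ⊆ F ∪ ⋃ g ∈ gapsIn F x y, Ioo g.1 g.2 := by
  intro r hr
  by_cases hrF : r ∈ F
  · exact Or.inl hrF
  right
  have hbdd : BddAbove (F ∩ Iic r) := ⟨r, fun z hz => hz.2⟩
  have hbdd' : BddBelow (F ∩ Ici r) := ⟨r, fun z hz => hz.2⟩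
  obtain ⟨hpF, hpr⟩ := (hF.inter isClosed_Iic).csSup_mem ⟨x, hx, hr.1.le⟩ hbdd
  obtain ⟨hqF, hrq⟩ := (hF.inter isClosed_Ici).csInf_mem ⟨y, hy, hr.2.le⟩ hbdd'
  have hpr' := hpr.lt_of_ne (ne_of_mem_of_not_mem hpF hrF)
  have hrq' := hrq.lt_of_ne' (ne_of_mem_of_not_mem hqF hrF)
  refine mem_biUnion (x := (sSup (F ∩ Iic r), sInf (F ∩ Ici r)))
    ⟨hpF, hqF, le_csSup hbdd ⟨hx, hr.1.le⟩, hpr'.trans hrq', csInf_le hbdd' ⟨hy, hr.2.le⟩, ?_⟩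
    ⟨hpr', hrq'⟩
  · refine disjoint_left.2 fun z ⟨hpz, hzq⟩ hzF => ?_
    rcases le_total z r with hzr | hrz
    · exact hpz.not_ge (le_csSup hbdd ⟨hzF, hzr⟩)
    · exact hzq.not_ge (csInf_le hbdd' ⟨hzF, hrz⟩)

theorem ofReal_sub_le_tsum_gapsIn (hF : IsClosed F) (hFc : F.Countable) (hx : x ∈ F)
    (hy : y ∈ F) :
    ENNReal.ofReal (y - x) ≤ ∑' g : gapsIn F x y, ENNReal.ofReal (g.1.2 - g.1.1) :=
  calc ENNReal.ofReal (y - x) = volume (Ioo x y) := volume_Ioo.symm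
    _ ≤ volume F + volume (⋃ g ∈ gapsIn F x y, Ioo g.1 g.2) :=
      (measure_mono (Ioo_subset_union_gapsIn hF hx hy)).trans (measure_union_le _ _)
    _ ≤ ∑' g : gapsIn F x y, volume (Ioo g.1.1 g.1.2) := by
      rw [hFc.measure_zero, zero_add]
      exact measure_biUnion_le volume (gapsIn_countable hFc) _
    _ = ∑' g : gapsIn F x y, ENNReal.ofReal (g.1.2 - g.1.1) := by simp only [volume_Ioo]

end Real

theorem MonotoneOn.tsum_ofReal_sub_le {V : ℝ → ℝ} {a b : ℝ} (hV : MonotoneOn V (Icc a b))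
    {ι : Type*} [Countable ι] {u v : ι → ℝ} (hu : ∀ i, a ≤ u i) (huv : ∀ i, u i ≤ v i)
    (hv : ∀ i, v i ≤ b) (hdisj : Pairwise fun i j => v i ≤ u j ∨ v j ≤ u i) :
    ∑' i, ENNReal.ofReal (V (v i) - V (u i)) ≤ ENNReal.ofReal (V b - V a) := by
  have hu' : ∀ i, u i ∈ Icc a b := fun i => ⟨hu i, (huv i).trans (hv i)⟩
  have hv' : ∀ i, v i ∈ Icc a b := fun i => ⟨(hu i).trans (huv i), hv i⟩
  have hIoc : Pairwise fun i j => Disjoint (Ioc (V (u i)) (V (v i))) (Ioc (V (u j)) (V (v j))) :=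
      fun i j hij => by
    rcases hdisj hij with h | h
    · exact Ioc_disjoint_Ioc_of_le (hV (hv' i) (hu' j) h)
    · exact (Ioc_disjoint_Ioc_of_le (hV (hv' j) (hu' i) h)).symm
  calc ∑' i, ENNReal.ofReal (V (v i) - V (u i)) = volume (⋃ i, Ioc (V (u i)) (V (v i))) := by
        rw [measure_iUnion hIoc fun _ => measurableSet_Ioc]
        simp only [Real.volume_Ioc]
    _ ≤ volume (Ioc (V a) (V b)) := measure_mono <| iUnion_subset fun i =>
        Ioc_subset_Ioc (hV ⟨le_rfl, (hu' i).1.trans (hu' i).2⟩ (hu' i) (hu i))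
          (hV (hv' i) ⟨(hv' i).1.trans (hv' i).2, le_rfl⟩ (hv i))
    _ = ENNReal.ofReal (V b - V a) := Real.volume_Ioc

section RealFunction

variable {h : ℝ → ℝ} {a b : ℝ}

theorem ContinuousOn.exists_crossing_interval (hh : ContinuousOn h (Icc a b)) (hab : a ≤ b)
    {p q : ℝ} (hp : h a ≤ p) (hpq : p < q) (hq : q ≤ h b) :
    ∃ u v, a ≤ u ∧ u < v ∧ v ≤ b ∧ h u ≤ p ∧ q ≤ h v ∧ (∀ t ∈ Ioo u v, p < h t ∧ h t < q) ∧
      ∀ t ∈ Icc a b, h t ≤ p → t ≤ u := by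
  set S := Icc a b ∩ h ⁻¹' Iic p
  have hSbdd : BddAbove S := ⟨b, fun t ht => ht.1.2⟩
  obtain ⟨⟨hau, hub⟩, hup⟩ := (hh.preimage_isClosed_of_isClosed isClosed_Icc isClosed_Iic).csSup_mem
    ⟨a, ⟨le_rfl, hab⟩, hp⟩ hSbdd
  set u := sSup S
  have hu_max : ∀ t ∈ Icc a b, h t ≤ p → t ≤ u := fun t ht htp => le_csSup hSbdd ⟨ht, htp⟩
  set T := Icc u b ∩ h ⁻¹' Ici q
  have hTbdd : BddBelow T := ⟨u, fun t ht => ht.1.1⟩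
  obtain ⟨⟨huv, hvb⟩, hvq⟩ :=
    ((hh.mono (Icc_subset_Icc_left hau)).preimage_isClosed_of_isClosed isClosed_Icc
      isClosed_Ici).csInf_mem ⟨b, ⟨hub, le_rfl⟩, hq⟩ hTbdd
  set v := sInf T
  refine ⟨u, v, hau, huv.lt_of_ne ?_, hvb, hup, hvq, fun t ⟨hut, htv⟩ => ⟨?_, ?_⟩, hu_max⟩
  · rintro huv
    exact hpq.not_ge (hvq.trans (huv ▸ hup))
  · exact lt_of_not_ge fun htp => hut.not_ge (hu_max t ⟨hau.trans hut.le, htv.le.trans hvb⟩ htp)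
  · exact lt_of_not_ge fun hqt => htv.not_ge (csInf_le hTbdd ⟨⟨hut.le, htv.le.trans hvb⟩, hqt⟩)

theorem ContinuousOn.abs_sub_le_of_forall_Ioo (hh : ContinuousOn h (Icc a b)) (hab : a < b)
    {c : ℝ} (H : ∀ s ∈ Ioo a b, ∀ t ∈ Ioo a b, |h t - h s| ≤ c) : |h b - h a| ≤ c := by
  have hcl : IsClosed (Icc a b ×ˢ Icc a b ∩ (fun z : ℝ × ℝ => |h z.2 - h z.1|) ⁻¹' Iic c) :=
    ((hh.comp continuousOn_snd fun _ hz => hz.2).sub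
      (hh.comp continuousOn_fst fun _ hz => hz.1)).abs.preimage_isClosed_of_isClosed
      (isClosed_Icc.prod isClosed_Icc) isClosed_Iic
  have hsub : Icc a b ×ˢ Icc a b ⊆ closure (Ioo a b ×ˢ Ioo a b) := by
    rw [closure_prod_eq, closure_Ioo hab.ne]
  have hIoo : Ioo a b ×ˢ Ioo a b ⊆
      Icc a b ×ˢ Icc a b ∩ (fun z : ℝ × ℝ => |h z.2 - h z.1|) ⁻¹' Iic c :=
    fun z hz => ⟨⟨Ioo_subset_Icc_self hz.1, Ioo_subset_Icc_self hz.2⟩, H _ hz.1 _ hz.2⟩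
  exact (closure_minimal hIoo hcl
    (hsub (mk_mem_prod (left_mem_Icc.2 hab.le) (right_mem_Icc.2 hab.le)))).2

theorem ContinuousOn.abs_sub_le_of_disjoint_Ioo (hh : ContinuousOn h (Icc a b)) {V : ℝ → ℝ}
    (hV : MonotoneOn V (Icc a b)) {K : Set ℝ}
    (hgap : ∀ s ∈ Icc a b, ∀ t ∈ Icc a b, s ≤ t → Disjoint (Icc s t) K → |h t - h s| ≤ V t - V s)
    {u v : ℝ} (hau : a ≤ u) (huv : u < v) (hvb : v ≤ b) (hK : Disjoint (Ioo u v) K) :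
    |h v - h u| ≤ V v - V u := by
  have hu : u ∈ Icc a b := ⟨hau, huv.le.trans hvb⟩
  have hv : v ∈ Icc a b := ⟨hau.trans huv.le, hvb⟩
  refine (hh.mono (Icc_subset_Icc hau hvb)).abs_sub_le_of_forall_Ioo huv fun s hs t ht => ?_
  wlog hst : s ≤ t generalizing s t
  · rw [abs_sub_comm]
    exact this t ht s hs (le_of_not_ge hst)
  have hs' : s ∈ Icc a b := ⟨hau.trans hs.1.le, hs.2.le.trans hvb⟩
  have ht' : t ∈ Icc a b := ⟨hau.trans ht.1.le, ht.2.le.trans hvb⟩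
  calc |h t - h s| ≤ V t - V s := hgap s hs' t ht' hst (hK.mono_left (Icc_subset_Ioo hs.1 ht.2))
    _ ≤ V v - V u := sub_le_sub (hV ht' hv ht.2.le) (hV hu hs' hs.1.le)

theorem ContinuousOn.sub_le_sub_of_countable_image (hh : ContinuousOn h (Icc a b)) (hab : a ≤ b)
    {V : ℝ → ℝ} (hV : MonotoneOn V (Icc a b)) {K : Set ℝ} (hK : IsClosed K)
    (hKc : (h '' (Icc a b ∩ K)).Countable)
    (hgap : ∀ s ∈ Icc a b, ∀ t ∈ Icc a b, s ≤ t → Disjoint (Icc s t) K → |h t - h s| ≤ V t - V s) :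
    h b - h a ≤ V b - V a := by
  have hVab : 0 ≤ V b - V a := sub_nonneg.2 (hV (left_mem_Icc.2 hab) (right_mem_Icc.2 hab) hab)
  set F := h '' (Icc a b ∩ K) ∪ {h a, h b}
  have hF : IsClosed F := ((isCompact_Icc.inter_right hK).image_of_continuousOn
    (hh.mono inter_subset_left)).isClosed.union (toFinite _).isClosed
  have hFc : F.Countable := hKc.union (toFinite _).countable
  have hcross : ∀ g : Real.gapsIn F (h a) (h b), ∃ u v, a ≤ u ∧ u < v ∧ v ≤ b ∧ h u ≤ g.1.1 ∧
      g.1.2 ≤ h v ∧ (∀ t ∈ Ioo u v, g.1.1 < h t ∧ h t < g.1.2) ∧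
      ∀ t ∈ Icc a b, h t ≤ g.1.1 → t ≤ u := fun g =>
    hh.exists_crossing_interval hab g.2.2.2.1 g.2.2.2.2.1 g.2.2.2.2.2.1
  choose u v hau huv hvb hu hv hmid hmax using hcross
  have hu_mem : ∀ g, u g ∈ Icc a b := fun g => ⟨hau g, (huv g).le.trans (hvb g)⟩
  have hincr : ∀ g, g.1.2 - g.1.1 ≤ V (v g) - V (u g) := by
    intro g
    have hK_gap : Disjoint (Ioo (u g) (v g)) K := disjoint_left.2 fun r hr hrK =>
      disjoint_left.1 g.2.2.2.2.2.2 (hmid g r hr)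
        (Or.inl ⟨r, ⟨⟨(hau g).trans hr.1.le, hr.2.le.trans (hvb g)⟩, hrK⟩, rfl⟩)
    have hbound := hh.abs_sub_le_of_disjoint_Ioo hV hgap (hau g) (huv g) (hvb g) hK_gap
    linarith [le_abs_self (h (v g) - h (u g)), hu g, hv g]
  have hvu : ∀ g g', g.1.2 ≤ g'.1.1 → v g ≤ u g' := by
    intro g g' hle
    by_contra! hlt
    have hug : u g ≤ u g' := hmax g' (u g) (hu_mem g) ((hu g).trans (g.2.2.2.2.1.le.trans hle))
    have ht : (u g' + v g) / 2 ∈ Ioo (u g) (v g) := ⟨by linarith, by linarith⟩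
    have ht' : (u g' + v g) / 2 ∈ Icc a b := Ioo_subset_Icc_self.trans
      (Icc_subset_Icc (hau g) (hvb g)) ht
    exact (show u g' < (u g' + v g) / 2 by linarith).not_ge
      (hmax g' _ ht' ((hmid g _ ht).2.le.trans hle))
  have horder : Pairwise fun g g' : Real.gapsIn F (h a) (h b) => v g ≤ u g' ∨ v g' ≤ u g :=
    fun g g' hne => (Real.gapsIn_le_or_le g.2 g'.2 (Subtype.coe_injective.ne hne)).imp
      (hvu g g') (hvu g' g)
  have := (Real.gapsIn_countable (x := h a) (y := h b) hFc).to_subtype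
  refine (ENNReal.ofReal_le_ofReal_iff hVab).1 ?_
  calc ENNReal.ofReal (h b - h a)
      ≤ ∑' g : Real.gapsIn F (h a) (h b), ENNReal.ofReal (g.1.2 - g.1.1) :=
        Real.ofReal_sub_le_tsum_gapsIn hF hFc (Or.inr (Or.inl rfl)) (Or.inr (Or.inr rfl))
    _ ≤ ∑' g, ENNReal.ofReal (V (v g) - V (u g)) :=
        ENNReal.tsum_le_tsum fun g => ENNReal.ofReal_le_ofReal (hincr g)
    _ ≤ ENNReal.ofReal (V b - V a) := hV.tsum_ofReal_sub_le hau (fun g => (huv g).le) hvb horder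

end RealFunction

theorem intrinsicDist_le_pathLength {M : Type*} [MetricSpace M] {E : Set M} {γ : ℝ → M}
    {a b : ℝ} {x y : M} (hγ : IsPathIn E γ a b x y) (hfin : pathLength γ a b < ⊤) :
    intrinsicDist E x y ≤ pathLength γ a b :=
  sInf_le ⟨γ, a, b, hγ, hfin, rfl⟩

theorem ENNReal.le_mul_sInf {s : Set ℝ≥0∞} (hs : s.Nonempty) {a b : ℝ≥0∞} (ha : a ≠ ⊤)
    (h : ∀ c ∈ s, b ≤ a * c) : b ≤ a * sInf s := by
  have := hs.to_subtype
  rw [sInf_eq_iInf', ENNReal.mul_iInf fun h => absurd h ha]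
  exact le_iInf fun c => h c c.2

section LipschitzOffTheta

variable {M Y : Type*} [MetricSpace M] [MetricSpace Y] {Θ : Set M} {f : M → Y} {L : NNReal}

theorem edist_le_mul_pathLength_of_isPathIn_compl
    (hLip : ∀ x ∈ Θᶜ, ∀ y ∈ Θᶜ, intrinsicDist Θᶜ x y < ⊤ →
      edist (f x) (f y) ≤ L * intrinsicDist Θᶜ x y)
    {γ : ℝ → M} {a b : ℝ} {x y : M} (hγ : IsPathIn Θᶜ γ a b x y) (hfin : pathLength γ a b < ⊤) :
    edist (f x) (f y) ≤ L * pathLength γ a b := by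
  have hdist := intrinsicDist_le_pathLength hγ hfin
  obtain ⟨hab, -, rfl, rfl, hmem⟩ := hγ
  exact (hLip _ (hmem a (left_mem_Icc.2 hab)) _ (hmem b (right_mem_Icc.2 hab))
    (hdist.trans_lt hfin)).trans (by gcongr)

theorem edist_le_mul_pathLength_of_countable_closure (hf : Continuous f)
    (hLip : ∀ x ∈ Θᶜ, ∀ y ∈ Θᶜ, intrinsicDist Θᶜ x y < ⊤ →
      edist (f x) (f y) ≤ L * intrinsicDist Θᶜ x y)
    {γ : ℝ → M} {a b : ℝ} {x y : M} (hγ : IsPathIn Set.univ γ a b x y)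
    (hfin : pathLength γ a b < ⊤) (hcnt : (closure (γ '' Icc a b ∩ Θ)).Countable) :
    edist (f x) (f y) ≤ L * pathLength γ a b := by
  obtain ⟨hab, hγc, rfl, rfl, -⟩ := hγ
  have hbv : LocallyBoundedVariationOn γ (Icc a b) :=
    BoundedVariationOn.locallyBoundedVariationOn hfin.ne
  have hvar : ∀ {s t}, s ∈ Icc a b → t ∈ Icc a b → s ≤ t →
      variationOnFromTo γ (Icc a b) a t - variationOnFromTo γ (Icc a b) a s =
        (pathLength γ s t).toReal := fun hs ht hst => by
    rw [variationOnFromTo.sub_right hbv (left_mem_Icc.2 hab) ht hs,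
      variationOnFromTo.eq_of_le _ _ hst, inter_eq_right.2 (Icc_subset_Icc hs.1 ht.2), pathLength]
  set K := Icc a b ∩ γ ⁻¹' closure (γ '' Icc a b ∩ Θ)
  have hh : ContinuousOn (fun t => dist (f (γ t)) (f (γ a))) (Icc a b) := by fun_prop
  have hcount : ((fun t => dist (f (γ t)) (f (γ a))) '' (Icc a b ∩ K)).Countable :=
    (hcnt.image fun z => dist (f z) (f (γ a))).mono <| by
      rintro _ ⟨t, ⟨-, -, ht⟩, rfl⟩
      exact ⟨γ t, ht, rfl⟩
  have hgap : ∀ s ∈ Icc a b, ∀ t ∈ Icc a b, s ≤ t → Disjoint (Icc s t) K →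
      |dist (f (γ t)) (f (γ a)) - dist (f (γ s)) (f (γ a))| ≤
        L * variationOnFromTo γ (Icc a b) a t - L * variationOnFromTo γ (Icc a b) a s := by
    intro s hs t ht hst hK
    have hst_ab : Icc s t ⊆ Icc a b := Icc_subset_Icc hs.1 ht.2
    have hpath : IsPathIn Θᶜ γ s t (γ s) (γ t) :=
      ⟨hst, hγc.mono hst_ab, rfl, rfl, fun r hr hrΘ => disjoint_left.1 hK hr
        ⟨hst_ab hr, subset_closure ⟨mem_image_of_mem γ (hst_ab hr), hrΘ⟩⟩⟩
    have hfin' : pathLength γ s t < ⊤ := (eVariationOn.mono γ hst_ab).trans_lt hfin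
    have hlip := edist_le_mul_pathLength_of_isPathIn_compl hLip hpath hfin'
    rw [← mul_sub, hvar hs ht hst]
    calc _ ≤ dist (f (γ s)) (f (γ t)) := (abs_dist_sub_le _ _ _).trans_eq (dist_comm _ _)
      _ ≤ L * (pathLength γ s t).toReal := by
        simpa [dist_edist, ENNReal.toReal_mul] using
          ENNReal.toReal_mono (ENNReal.mul_ne_top ENNReal.coe_ne_top hfin'.ne) hlip
  have key := hh.sub_le_sub_of_countable_image hab
    (fun s hs t ht hst => mul_le_mul_of_nonneg_left
      (variationOnFromTo.monotoneOn hbv (left_mem_Icc.2 hab) hs ht hst) L.coe_nonneg)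
    (hγc.preimage_isClosed_of_isClosed isClosed_Icc isClosed_closure) hcount hgap
  rw [dist_self, sub_zero, ← mul_sub, hvar (left_mem_Icc.2 hab) (right_mem_Icc.2 hab) hab] at key
  rw [edist_comm, edist_dist]
  exact ENNReal.ofReal_le_of_le_toReal (by rwa [ENNReal.toReal_mul, ENNReal.coe_toReal])

end LipschitzOffTheta

/-- Corollary: on a length space, a continuous function which is intrinsically `L`-Lipschitz
outside a permeable set is `L`-Lipschitz on the whole space. -/
theorem stmt7 {M Y : Type*} [MetricSpace M] [MetricSpace Y]
    (hlength : ∀ x y : M, intrinsicDist Set.univ x y = edist x y)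
    (Θ : Set M) (hΘ : Permeable Θ) (f : M → Y) (hf : Continuous f) (L : NNReal)
    (hLip : ∀ x ∈ Θᶜ, ∀ y ∈ Θᶜ, intrinsicDist Θᶜ x y < ⊤ →
      edist (f x) (f y) ≤ L * intrinsicDist Θᶜ x y) :
    LipschitzWith L f := by
  intro x y
  have hθ : thetaDistIn Set.univ Θ x y = edist x y := (hΘ x trivial y trivial).trans (hlength x y)
  rw [← hθ, thetaDistIn]
  refine ENNReal.le_mul_sInf ?_ ENNReal.coe_ne_top ?_
  · refine nonempty_iff_ne_empty.2 fun hempty => edist_ne_top x y ?_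
    rw [← hθ, thetaDistIn, hempty, sInf_empty]
  · rintro _ ⟨γ, a, b, hγ, hfin, hcnt, rfl⟩
    exact edist_le_mul_pathLength_of_countable_closure hf hLip hγ hfin (by simpa using hcnt)
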